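/- arXiv:1709.07923 — 3 statements merged into one kernel-verified Lean document; each statement's English description precedes it below -/
import Mathlib

section
/- Let U be an open subset of {(ρ,z) ∈ ℝ² : ρ > 0}, let ψ : U → ℝ be twice continuously differentiable, let g, h : U → ℝ be continuously differentiable with (ρg)_ρ + (ρh)_z = 0 on U, and let γ : U → ℝ be twice continuously differentiable with γ_ρ = ρ(ψ_ρ² − ψ_z² − g) and γ_z = ρ(2ψ_ρψ_z − h) on U. Then at every point of U one has ψ_ρ² + ψ_z² + γ_ρρ + γ_zz = 2ρψ_ρ(ψ_ρρ + ψ_ρ/ρ + ψ_zz). In particular, if ψ_ρρ + ψ_ρ/ρ + ψ_zz = 0 on U, then ψ_ρ² + ψ_z² + γ_ρρ + γ_zz = 0 on U. -/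
/-- Partial derivative with respect to the first coordinate `ρ`. -/
noncomputable def dρ (f : ℝ × ℝ → ℝ) (p : ℝ × ℝ) : ℝ := fderiv ℝ f p (1, 0)

/-- Partial derivative with respect to the second coordinate `z`. -/
noncomputable def dz (f : ℝ × ℝ → ℝ) (p : ℝ × ℝ) : ℝ := fderiv ℝ f p (0, 1)

/-!
Write `a = ψ_ρ`, `b = ψ_z`. Differentiating the two equations for `γ_ρ`, `γ_z` gives
`γ_ρρ + γ_zz = a² - b² - g - ρ (g_ρ + h_z) + 2ρ (a a_ρ - b b_ρ + b a_z + a b_z)`.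
The Cauchy–Riemann relation `g + ρ g_ρ + ρ h_z = 0` removes the `g, h` terms and the symmetry
`b_ρ = a_z` of the Hessian of `ψ` removes the mixed terms, leaving
`a² - b² + 2ρa (a_ρ + b_z)`; adding `a² + b²` gives `2ρa (a_ρ + a/ρ + b_z)`.
-/

open Filter Topology

section DirectionalDerivative

variable {E : Type*} [NormedAddCommGroup E] [NormedSpace ℝ E] {f : E → ℝ} {p : E}

theorem ContDiffAt.differentiableAt_fderiv (hf : ContDiffAt ℝ 2 f p) :
    DifferentiableAt ℝ (fderiv ℝ f) p :=
  (hf.fderiv_right (m := 1) (by norm_num)).differentiableAt one_ne_zero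

theorem ContDiffAt.differentiableAt_fderiv_apply (hf : ContDiffAt ℝ 2 f p) (v : E) :
    DifferentiableAt ℝ (fun q => fderiv ℝ f q v) p :=
  hf.differentiableAt_fderiv.clm_apply (differentiableAt_const v)

theorem ContDiffAt.fderiv_fderiv_apply_comm (hf : ContDiffAt ℝ 2 f p) (v w : E) :
    fderiv ℝ (fun q => fderiv ℝ f q v) p w = fderiv ℝ (fun q => fderiv ℝ f q w) p v := by
  rw [fderiv_clm_apply hf.differentiableAt_fderiv (differentiableAt_const v),
    fderiv_clm_apply hf.differentiableAt_fderiv (differentiableAt_const w)]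
  simpa using hf.isSymmSndFDerivAt (by simp) w v

end DirectionalDerivative

section Partials

variable {f f' G : ℝ × ℝ → ℝ} {p : ℝ × ℝ}

theorem Filter.EventuallyEq.dρ_eq (h : f =ᶠ[𝓝 p] f') : dρ f p = dρ f' p := by
  rw [dρ, dρ, h.fderiv_eq]

theorem Filter.EventuallyEq.dz_eq (h : f =ᶠ[𝓝 p] f') : dz f p = dz f' p := by
  rw [dz, dz, h.fderiv_eq]

theorem dρ_fst_mul (hG : DifferentiableAt ℝ G p) :
    dρ (fun q => q.1 * G q) p = G p + p.1 * dρ G p := by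
  simp (disch := fun_prop) [dρ, fderiv_fun_mul, fderiv_fst]
  ring

theorem dz_fst_mul (hG : DifferentiableAt ℝ G p) :
    dz (fun q => q.1 * G q) p = p.1 * dz G p := by
  simp (disch := fun_prop) [dz, fderiv_fun_mul, fderiv_fst]

theorem ContDiffAt.differentiableAt_dρ (hf : ContDiffAt ℝ 2 f p) :
    DifferentiableAt ℝ (dρ f) p :=
  hf.differentiableAt_fderiv_apply _

theorem ContDiffAt.differentiableAt_dz (hf : ContDiffAt ℝ 2 f p) :
    DifferentiableAt ℝ (dz f) p :=
  hf.differentiableAt_fderiv_apply _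

theorem ContDiffAt.dρ_dz_comm (hf : ContDiffAt ℝ 2 f p) : dρ (dz f) p = dz (dρ f) p :=
  hf.fderiv_fderiv_apply_comm _ _

end Partials

theorem sq_add_sq_add_dρ_dρ_add_dz_dz_eq {a b g h γ : ℝ × ℝ → ℝ} {p : ℝ × ℝ}
    (ha : DifferentiableAt ℝ a p) (hb : DifferentiableAt ℝ b p)
    (hg : DifferentiableAt ℝ g p) (hh : DifferentiableAt ℝ h p) (hab : dρ b p = dz a p)
    (hCR : dρ (fun q => q.1 * g q) p + dz (fun q => q.1 * h q) p = 0)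
    (hγρ : dρ γ =ᶠ[𝓝 p] fun q => q.1 * (a q ^ 2 - b q ^ 2 - g q))
    (hγz : dz γ =ᶠ[𝓝 p] fun q => q.1 * (2 * a q * b q - h q)) :
    a p ^ 2 + b p ^ 2 + dρ (dρ γ) p + dz (dz γ) p
      = 2 * p.1 * a p * (dρ a p + dz b p) + 2 * a p ^ 2 := by
  rw [dρ_fst_mul hg, dz_fst_mul hh] at hCR
  rw [hγρ.dρ_eq, hγz.dz_eq, dρ_fst_mul (by fun_prop), dz_fst_mul (by fun_prop)]
  simp (disch := fun_prop) only [dρ, dz, fderiv_fun_sub, fderiv_fun_pow, fderiv_fun_mul,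
    fderiv_fun_const, Nat.add_one_sub_one, pow_one, nsmul_eq_mul, Nat.cast_ofNat, sub_apply,
    add_apply, smul_apply, smul_eq_mul, Pi.zero_apply, smul_zero, add_zero] at hab hCR ⊢
  linear_combination -hCR - 2 * p.1 * b p * hab

theorem gamma_second_order_identity_general
    (U : Set (ℝ × ℝ)) (hUhalf : U ⊆ {p : ℝ × ℝ | 0 < p.1}) (hUo : IsOpen U)
    (ψ g h : ℝ × ℝ → ℝ)
    (hψ : ContDiffOn ℝ 2 ψ U) (hg : ContDiffOn ℝ 1 g U) (hh : ContDiffOn ℝ 1 h U)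
    (hCR : ∀ p ∈ U, dρ (fun q => q.1 * g q) p + dz (fun q => q.1 * h q) p = 0)
    (γ : ℝ × ℝ → ℝ)
    (hγρ : ∀ p ∈ U, dρ γ p = p.1 * ((dρ ψ p) ^ 2 - (dz ψ p) ^ 2 - g p))
    (hγz : ∀ p ∈ U, dz γ p = p.1 * (2 * dρ ψ p * dz ψ p - h p)) :
    (∀ p ∈ U,
      (dρ ψ p) ^ 2 + (dz ψ p) ^ 2 + dρ (dρ γ) p + dz (dz γ) p
        = 2 * p.1 * dρ ψ p * (dρ (dρ ψ) p + dρ ψ p / p.1 + dz (dz ψ) p)) ∧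
    ((∀ p ∈ U, dρ (dρ ψ) p + dρ ψ p / p.1 + dz (dz ψ) p = 0) →
      ∀ p ∈ U, (dρ ψ p) ^ 2 + (dz ψ p) ^ 2 + dρ (dρ γ) p + dz (dz γ) p = 0) := by
  have identity : ∀ p ∈ U, (dρ ψ p) ^ 2 + (dz ψ p) ^ 2 + dρ (dρ γ) p + dz (dz γ) p
      = 2 * p.1 * dρ ψ p * (dρ (dρ ψ) p + dρ ψ p / p.1 + dz (dz ψ) p) := by
    intro p hp
    have hpU : U ∈ 𝓝 p := hUo.mem_nhds hp
    have hψp : ContDiffAt ℝ 2 ψ p := hψ.contDiffAt hpU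
    rw [sq_add_sq_add_dρ_dρ_add_dz_dz_eq hψp.differentiableAt_dρ hψp.differentiableAt_dz
      ((hg.contDiffAt hpU).differentiableAt one_ne_zero)
      ((hh.contDiffAt hpU).differentiableAt one_ne_zero) hψp.dρ_dz_comm (hCR p hp)
      (eventually_of_mem hpU hγρ) (eventually_of_mem hpU hγz)]
    have hρ : p.1 ≠ 0 := (show 0 < p.1 from hUhalf hp).ne'
    field_simp
    ring
  exact ⟨identity, fun hlap p hp => by rw [identity p hp, hlap p hp, mul_zero]⟩

theorem gamma_second_order_identity
    (U : Set (ℝ × ℝ)) (hUhalf : U ⊆ {p : ℝ × ℝ | 0 < p.1}) (hUo : IsOpen U)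
    (ψ g h : ℝ × ℝ → ℝ)
    (hψ : ContDiffOn ℝ 2 ψ U) (hg : ContDiffOn ℝ 1 g U) (hh : ContDiffOn ℝ 1 h U)
    (hCR : ∀ p ∈ U, dρ (fun q => q.1 * g q) p + dz (fun q => q.1 * h q) p = 0)
    (γ : ℝ × ℝ → ℝ) (hγ : ContDiffOn ℝ 2 γ U)
    (hγρ : ∀ p ∈ U, dρ γ p = p.1 * ((dρ ψ p) ^ 2 - (dz ψ p) ^ 2 - g p))
    (hγz : ∀ p ∈ U, dz γ p = p.1 * (2 * dρ ψ p * dz ψ p - h p)) :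
    (∀ p ∈ U,
      (dρ ψ p) ^ 2 + (dz ψ p) ^ 2 + dρ (dρ γ) p + dz (dz γ) p
        = 2 * p.1 * dρ ψ p * (dρ (dρ ψ) p + dρ ψ p / p.1 + dz (dz ψ) p)) ∧
    ((∀ p ∈ U, dρ (dρ ψ) p + dρ ψ p / p.1 + dz (dz ψ) p = 0) →
      ∀ p ∈ U, (dρ ψ p) ^ 2 + (dz ψ p) ^ 2 + dρ (dρ γ) p + dz (dz γ) p = 0) :=
  gamma_second_order_identity_general U hUhalf hUo ψ g h hψ hg hh hCR γ hγρ hγz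
end

section
/- Let I be a nonempty interval in (0,∞), let K > 0 be a real number, let ε ∈ ℝ, and let ψ, γ, p, v : I → ℝ be functions such that v(ρ) ≠ 0 for all ρ ∈ I and such that, for all ρ ∈ I: (ε + p(ρ)) e^{2γ(ρ)−2ψ(ρ)} v(ρ) = 0, ψ'(ρ)² − γ'(ρ)/ρ = K p(ρ) e^{2γ(ρ)−2ψ(ρ)}, and −ψ'(ρ)² + γ'(ρ)/ρ = K [ p(ρ) e^{2γ(ρ)−2ψ(ρ)} + (ε + p(ρ)) e^{4γ(ρ)−6ψ(ρ)} v(ρ)² ]. Then p(ρ) = 0 for all ρ ∈ I and ε = 0. -/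
theorem pressure_and_energy_vanish
    (I : Set ℝ) (hIne : I.Nonempty) (hIint : I.OrdConnected) (hIpos : I ⊆ Set.Ioi 0)
    (K : ℝ) (hK : 0 < K) (ε : ℝ)
    (ψ γ p v : ℝ → ℝ)
    (hv : ∀ ρ ∈ I, v ρ ≠ 0)
    (e₁₃ : ∀ ρ ∈ I, (ε + p ρ) * Real.exp (2 * γ ρ - 2 * ψ ρ) * v ρ = 0)
    (e₂₂ : ∀ ρ ∈ I, (deriv ψ ρ) ^ 2 - deriv γ ρ / ρ
      = K * p ρ * Real.exp (2 * γ ρ - 2 * ψ ρ))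
    (e₃₃ : ∀ ρ ∈ I, -(deriv ψ ρ) ^ 2 + deriv γ ρ / ρ
      = K * (p ρ * Real.exp (2 * γ ρ - 2 * ψ ρ)
          + (ε + p ρ) * Real.exp (4 * γ ρ - 6 * ψ ρ) * (v ρ) ^ 2)) :
    (∀ ρ ∈ I, p ρ = 0) ∧ ε = 0 := by
  have hε : ∀ ρ ∈ I, ε + p ρ = 0 := by
    intro ρ hρ
    have h := e₁₃ ρ hρ
    have he := Real.exp_ne_zero (2 * γ ρ - 2 * ψ ρ)
    have hv' := hv ρ hρ
    rcases mul_eq_zero.1 h with h' | h'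
    · rcases mul_eq_zero.1 h' with h'' | h''
      · exact h''
      · exact absurd h'' he
    · exact absurd h' hv'
  have hp : ∀ ρ ∈ I, p ρ = 0 := by
    intro ρ hρ
    have h2 := e₂₂ ρ hρ
    have h3 := e₃₃ ρ hρ
    have h0 := hε ρ hρ
    rw [h0, zero_mul, zero_mul, add_zero] at h3
    have hsum : 0 = 2 * (K * p ρ * Real.exp (2 * γ ρ - 2 * ψ ρ)) := by linarith
    have he := (Real.exp_pos (2 * γ ρ - 2 * ψ ρ)).ne'
    have : K * p ρ * Real.exp (2 * γ ρ - 2 * ψ ρ) = 0 := by linarith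
    rcases mul_eq_zero.1 this with h' | h'
    · rcases mul_eq_zero.1 h' with h'' | h''
      · exact absurd h'' hK.ne'
      · exact h''
    · exact absurd h' he
  obtain ⟨ρ₀, hρ₀⟩ := hIne
  have := hε ρ₀ hρ₀
  have := hp ρ₀ hρ₀
  exact ⟨hp, by linarith⟩
end

section
/- Let R > 0, let c > 0, η > 0, K > 0 and ε, v_R be real numbers with v_R ≠ 0. Let ψ, γ : (R,∞) → ℝ be twice continuously differentiable, let p : (R,∞) → ℝ, and let v : [R,∞) → ℝ be continuous with v(R) = v_R and differentiable on (R,∞), and suppose that for all ρ ∈ (R,∞) the following seven equations hold: (i) e^{2ψ−2γ}[ψ'² + γ'' − 2(ψ'' + ψ'/ρ)] = εK; (ii) cη v² e^{2γ−3ψ}(γ' − ψ') = 0; (iii) (ε + p) e^{2γ−2ψ} v = 0; (iv) ψ'² − γ'/ρ = K p e^{2γ−2ψ}; (v) cη v' e^{2γ−3ψ} = 0; (vi) −ψ'² + γ'/ρ = K[p e^{2γ−2ψ} + (ε + p) e^{4γ−6ψ} v²]; (vii) ψ'² + γ'' = −K p e^{2γ−2ψ}. Then: v(ρ) = v_R for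 all ρ ≥ R; p(ρ) = 0 for all ρ > R; ε = 0; γ − ψ is constant on (R,∞); and there exist k₁ ∈ {0,1} and k₂, k₃ ∈ ℝ such that ψ(ρ) = k₁ log ρ + k₂ and γ(ρ) = k₁ log ρ + k₃ for all ρ ∈ (R,∞). -/
/-!
Since the viscosity is positive, (v) forces v' = 0, so v ≡ v_R ≠ 0 by the non-slip condition.
Then (iii) gives ε + p = 0 and (ii) gives γ' = ψ'; adding (iv) and (vi) leaves 2Kp e^{2γ−2ψ} = 0,
so p = 0 and ε = 0. Now (iv) reads ψ'² = ψ'/ρ, i.e. ρψ' ∈ {0, 1}; as ρψ' is continuous on the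
connected set (R, ∞) it is a constant k₁, and integrating ψ' = k₁/ρ and γ' = ψ' gives the
logarithmic profiles.
-/

open Set

theorem eq_of_deriv_eq_zero_on_Ici {f : ℝ → ℝ} {a : ℝ} (hc : ContinuousOn f (Ici a))
    (hd : DifferentiableOn ℝ f (Ioi a)) (h0 : EqOn (deriv f) 0 (Ioi a)) :
    ∀ x ∈ Ici a, f x = f a := by
  rw [← interior_Ici] at hd h0
  intro x hx
  have hmono := monotoneOn_of_deriv_nonneg (convex_Ici a) hc hd fun y hy => (h0 hy).ge
  have hanti := antitoneOn_of_deriv_nonpos (convex_Ici a) hc hd fun y hy => (h0 hy).le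
  exact le_antisymm (hanti self_mem_Ici hx hx) (hmono self_mem_Ici hx hx)

theorem mul_mem_zero_one_of_sq_eq_div {x ρ : ℝ} (hρ : ρ ≠ 0) (h : x ^ 2 = x / ρ) :
    ρ * x ∈ ({0, 1} : Set ℝ) := by
  have hfactor : ρ * x * (ρ * x - 1) = 0 := by
    field_simp at h
    linear_combination ρ * h
  rcases mul_eq_zero.1 hfactor with h0 | h1
  · exact .inl h0
  · exact .inr (sub_eq_zero.1 h1)

theorem exists_eq_mul_log_add_of_mul_deriv_eq {f : ℝ → ℝ} {a k : ℝ} (ha : 0 ≤ a)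
    (hf : DifferentiableOn ℝ f (Ioi a)) (h : ∀ x ∈ Ioi a, x * deriv f x = k) :
    ∃ b, ∀ x ∈ Ioi a, f x = k * Real.log x + b := by
  have hx0 {x} (hx : x ∈ Ioi a) : x ≠ 0 := (ha.trans_lt hx).ne'
  have hlog : DifferentiableOn ℝ (fun x => k * Real.log x) (Ioi a) := fun x hx =>
    ((Real.differentiableAt_log (hx0 hx)).const_mul k).differentiableWithinAt
  obtain ⟨b, hb⟩ := isOpen_Ioi.exists_eq_add_of_deriv_eq isPreconnected_Ioi hf hlog
    fun x hx => by
      rw [deriv_const_mul _ (Real.differentiableAt_log (hx0 hx)), Real.deriv_log,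
        ← h x hx, mul_comm x, mul_assoc, mul_inv_cancel₀ (hx0 hx), mul_one]
  exact ⟨b, hb⟩

theorem poiseuille_like_solution_general
    (R : ℝ) (hR : 0 < R)
    (c η K : ℝ) (hc : 0 < c) (hη : 0 < η) (hK : 0 < K)
    (ε vR : ℝ) (hvR : vR ≠ 0)
    (ψ γ p v : ℝ → ℝ)
    (hψ : ContDiffOn ℝ 2 ψ (Set.Ioi R)) (hγ : ContDiffOn ℝ 2 γ (Set.Ioi R))
    (hvcont : ContinuousOn v (Set.Ici R)) (hvR' : v R = vR)
    (hvd : ∀ ρ ∈ Set.Ioi R, DifferentiableAt ℝ v ρ)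
    (e₂ : ∀ ρ ∈ Set.Ioi R, c * η * (v ρ) ^ 2 * Real.exp (2 * γ ρ - 3 * ψ ρ)
      * (deriv γ ρ - deriv ψ ρ) = 0)
    (e₃ : ∀ ρ ∈ Set.Ioi R, (ε + p ρ) * Real.exp (2 * γ ρ - 2 * ψ ρ) * v ρ = 0)
    (e₄ : ∀ ρ ∈ Set.Ioi R, (deriv ψ ρ) ^ 2 - deriv γ ρ / ρ
      = K * p ρ * Real.exp (2 * γ ρ - 2 * ψ ρ))
    (e₅ : ∀ ρ ∈ Set.Ioi R, c * η * deriv v ρ * Real.exp (2 * γ ρ - 3 * ψ ρ) = 0)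
    (e₆ : ∀ ρ ∈ Set.Ioi R, -(deriv ψ ρ) ^ 2 + deriv γ ρ / ρ
      = K * (p ρ * Real.exp (2 * γ ρ - 2 * ψ ρ)
          + (ε + p ρ) * Real.exp (4 * γ ρ - 6 * ψ ρ) * (v ρ) ^ 2)) :
    (∀ ρ ∈ Set.Ici R, v ρ = vR) ∧
    (∀ ρ ∈ Set.Ioi R, p ρ = 0) ∧
    ε = 0 ∧
    (∃ C : ℝ, ∀ ρ ∈ Set.Ioi R, γ ρ - ψ ρ = C) ∧
    (∃ k₁ ∈ ({0, 1} : Set ℝ), ∃ k₂ k₃ : ℝ, ∀ ρ ∈ Set.Ioi R,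
      ψ ρ = k₁ * Real.log ρ + k₂ ∧ γ ρ = k₁ * Real.log ρ + k₃) := by
  have hR1 : R + 1 ∈ Ioi R := lt_add_one R
  have hv' : EqOn (deriv v) 0 (Ioi R) := fun ρ hρ => by
    simpa [hc.ne', hη.ne', Real.exp_ne_zero] using e₅ ρ hρ
  have hv : ∀ ρ ∈ Ici R, v ρ = vR := hvR' ▸
    eq_of_deriv_eq_zero_on_Ici hvcont (fun ρ hρ => (hvd ρ hρ).differentiableWithinAt) hv'
  have hεp : ∀ ρ ∈ Ioi R, ε + p ρ = 0 := fun ρ hρ => by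
    simpa [hv ρ (Ioi_subset_Ici_self hρ), hvR, Real.exp_ne_zero] using e₃ ρ hρ
  have hp : ∀ ρ ∈ Ioi R, p ρ = 0 := fun ρ hρ => by
    have : 2 * K * p ρ * Real.exp (2 * γ ρ - 2 * ψ ρ) = 0 := by
      linear_combination
        -e₄ ρ hρ - e₆ ρ hρ - K * Real.exp (4 * γ ρ - 6 * ψ ρ) * v ρ ^ 2 * hεp ρ hρ
    simpa [hK.ne', Real.exp_ne_zero] using this
  have hγψ' : EqOn (deriv γ) (deriv ψ) (Ioi R) := fun ρ hρ => by
    simpa [hv ρ (Ioi_subset_Ici_self hρ), hc.ne', hη.ne', hvR, Real.exp_ne_zero, sub_eq_zero]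
      using e₂ ρ hρ
  have hψd := hψ.differentiableOn two_ne_zero
  obtain ⟨C, hC⟩ := isOpen_Ioi.exists_eq_add_of_deriv_eq isPreconnected_Ioi
    (hγ.differentiableOn two_ne_zero) hψd hγψ'
  have hk : MapsTo (fun ρ => ρ * deriv ψ ρ) (Ioi R) {0, 1} := fun ρ hρ =>
    mul_mem_zero_one_of_sq_eq_div (hR.trans hρ).ne' <| by
      simpa [hp ρ hρ, hγψ' hρ, sub_eq_zero] using e₄ ρ hρ
  obtain ⟨k₁, hk₁, hψ'⟩ := isPreconnected_Ioi.eqOn_const_of_mapsTo (toFinite _).isDiscrete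
    (continuousOn_id.mul (hψ.continuousOn_deriv_of_isOpen isOpen_Ioi one_le_two)) hk
    (insert_nonempty _ _)
  obtain ⟨k₂, hk₂⟩ := exists_eq_mul_log_add_of_mul_deriv_eq hR.le hψd hψ'
  refine ⟨hv, hp, by simpa [hp _ hR1] using hεp _ hR1, ⟨C, fun ρ hρ => ?_⟩, k₁, hk₁, k₂, k₂ + C,
    fun ρ hρ => ⟨hk₂ ρ hρ, ?_⟩⟩
  · simp [hC hρ]
  · simp only [hC hρ, hk₂ ρ hρ]; ring

theorem poiseuille_like_solution
    (R : ℝ) (hR : 0 < R)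
    (c η K : ℝ) (hc : 0 < c) (hη : 0 < η) (hK : 0 < K)
    (ε vR : ℝ) (hvR : vR ≠ 0)
    (ψ γ p v : ℝ → ℝ)
    (hψ : ContDiffOn ℝ 2 ψ (Set.Ioi R)) (hγ : ContDiffOn ℝ 2 γ (Set.Ioi R))
    (hvcont : ContinuousOn v (Set.Ici R)) (hvR' : v R = vR)
    (hvd : ∀ ρ ∈ Set.Ioi R, DifferentiableAt ℝ v ρ)
    (e₁ : ∀ ρ ∈ Set.Ioi R, Real.exp (2 * ψ ρ - 2 * γ ρ)
      * ((deriv ψ ρ) ^ 2 + deriv (deriv γ) ρ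
          - 2 * (deriv (deriv ψ) ρ + deriv ψ ρ / ρ)) = ε * K)
    (e₂ : ∀ ρ ∈ Set.Ioi R, c * η * (v ρ) ^ 2 * Real.exp (2 * γ ρ - 3 * ψ ρ)
      * (deriv γ ρ - deriv ψ ρ) = 0)
    (e₃ : ∀ ρ ∈ Set.Ioi R, (ε + p ρ) * Real.exp (2 * γ ρ - 2 * ψ ρ) * v ρ = 0)
    (e₄ : ∀ ρ ∈ Set.Ioi R, (deriv ψ ρ) ^ 2 - deriv γ ρ / ρ
      = K * p ρ * Real.exp (2 * γ ρ - 2 * ψ ρ))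
    (e₅ : ∀ ρ ∈ Set.Ioi R, c * η * deriv v ρ * Real.exp (2 * γ ρ - 3 * ψ ρ) = 0)
    (e₆ : ∀ ρ ∈ Set.Ioi R, -(deriv ψ ρ) ^ 2 + deriv γ ρ / ρ
      = K * (p ρ * Real.exp (2 * γ ρ - 2 * ψ ρ)
          + (ε + p ρ) * Real.exp (4 * γ ρ - 6 * ψ ρ) * (v ρ) ^ 2))
    (e₇ : ∀ ρ ∈ Set.Ioi R, (deriv ψ ρ) ^ 2 + deriv (deriv γ) ρ
      = -(K * p ρ * Real.exp (2 * γ ρ - 2 * ψ ρ))) :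
    (∀ ρ ∈ Set.Ici R, v ρ = vR) ∧
    (∀ ρ ∈ Set.Ioi R, p ρ = 0) ∧
    ε = 0 ∧
    (∃ C : ℝ, ∀ ρ ∈ Set.Ioi R, γ ρ - ψ ρ = C) ∧
    (∃ k₁ ∈ ({0, 1} : Set ℝ), ∃ k₂ k₃ : ℝ, ∀ ρ ∈ Set.Ioi R,
      ψ ρ = k₁ * Real.log ρ + k₂ ∧ γ ρ = k₁ * Real.log ρ + k₃) :=
  poiseuille_like_solution_general R hR c η K hc hη hK ε vR hvR ψ γ p v hψ hγ hvcont hvR' hvd e₂ e₃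
    e₄ e₅ e₆
end
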